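/- Let k ≥ 1 and let f be a C^{k+1} function on a compact interval I. If the derivative f' vanishes at k points x_1 < x_2 < ⋯ < x_k of I, then for every x ∈ I, |f'(x)| ≤ ‖f^{(k+1)}‖_∞ · |I|^k, where ‖f^{(k+1)}‖_∞ is the supremum norm of the (k+1)-st derivative on I and |I| is the length of I. -/

import Mathlib

/-!
Rolle's theorem between consecutive zeros of `f'` gives, for every `1 ≤ m ≤ k`, a zero of
`f⁽ᵐ⁾` in `I`. Starting from `|f⁽ᵏ⁺¹⁾| ≤ M` and going down one derivative at a time with the
mean value theorem from such a zero, each step costs a factor `|I|`, so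
`|f⁽ᵐ⁾| ≤ M |I|^(k+1-m)` on `I`.
-/

open Set Topology

namespace Paper

def OrderedZeros (g : ℝ → ℝ) (s : Set ℝ) (n : ℕ) (x : ℕ → ℝ) : Prop :=
  (∀ i < n, x i ∈ s ∧ g (x i) = 0) ∧ ∀ i, i + 1 < n → x i < x (i + 1)

theorem OrderedZeros.exists_derivWithin {g : ℝ → ℝ} {s : Set ℝ} {n : ℕ} {x : ℕ → ℝ}
    (h : OrderedZeros g s n x) (hs : s.OrdConnected) (hg : ContinuousOn g s) :
    ∃ c, OrderedZeros (derivWithin g s) s (n - 1) c := by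
  have rolle : ∀ i, i + 1 < n → ∃ c ∈ Ioo (x i) (x (i + 1)), derivWithin g s c = 0 := by
    intro i hi
    have hsub : Icc (x i) (x (i + 1)) ⊆ s := hs.out (h.1 i (by omega)).1 (h.1 (i + 1) hi).1
    obtain ⟨c, hc, hc0⟩ := exists_deriv_eq_zero (h.2 i hi) (hg.mono hsub)
      ((h.1 i (by omega)).2.trans (h.1 (i + 1) hi).2.symm)
    have hs_nhds : s ∈ 𝓝 c :=
      Filter.mem_of_superset (isOpen_Ioo.mem_nhds hc) (Ioo_subset_Icc_self.trans hsub)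
    exact ⟨c, hc, by rw [derivWithin_of_mem_nhds hs_nhds, hc0]⟩
  choose! c hc hc0 using rolle
  refine ⟨c, fun i hi => ⟨?_, hc0 i (by omega)⟩, fun i hi => ?_⟩
  · exact hs.out (h.1 i (by omega)).1 (h.1 (i + 1) (by omega)).1
      (Ioo_subset_Icc_self (hc i (by omega)))
  · exact (hc i (by omega)).2.trans (hc (i + 1) (by omega)).1

theorem OrderedZeros.exists_iteratedDerivWithin {f : ℝ → ℝ} {s : Set ℝ} {i n : ℕ}
    {x : ℕ → ℝ} (h : OrderedZeros (iteratedDerivWithin i f s) s n x) (hs : s.OrdConnected)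
    (hs' : UniqueDiffOn ℝ s) {j : ℕ} (hf : ContDiffOn ℝ (i + j) f s) :
    ∃ c, OrderedZeros (iteratedDerivWithin (i + j) f s) s (n - j) c := by
  induction j with
  | zero => exact ⟨x, h⟩
  | succ j ih =>
    obtain ⟨c, hc⟩ := ih (hf.of_le (by norm_cast; omega))
    rw [← add_assoc, iteratedDerivWithin_succ, ← Nat.sub_sub]
    exact hc.exists_derivWithin hs
      (hf.continuousOn_iteratedDerivWithin (by norm_cast; omega) hs')

theorem abs_le_mul_of_abs_derivWithin_le {g : ℝ → ℝ} {a b C : ℝ}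
    (hg : DifferentiableOn ℝ g (Icc a b)) {z₀ : ℝ} (hz₀ : z₀ ∈ Icc a b) (hgz₀ : g z₀ = 0)
    (hC : ∀ z ∈ Icc a b, |derivWithin g (Icc a b) z| ≤ C) {z : ℝ} (hz : z ∈ Icc a b) :
    |g z| ≤ C * (b - a) := by
  have hmvt := (convex_Icc a b).norm_image_sub_le_of_norm_derivWithin_le hg
    (by simpa only [Real.norm_eq_abs] using hC) hz₀ hz
  rw [hgz₀, sub_zero, Real.norm_eq_abs, Real.norm_eq_abs] at hmvt
  have hdist : |z - z₀| ≤ b - a :=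
    abs_sub_le_iff.2 ⟨by linarith [hz.2, hz₀.1], by linarith [hz.1, hz₀.2]⟩
  exact hmvt.trans (mul_le_mul_of_nonneg_left hdist ((abs_nonneg _).trans (hC z₀ hz₀)))

theorem abs_iteratedDerivWithin_le_of_exists_zero {f : ℝ → ℝ} {a b M : ℝ} (hab : a < b)
    {n : ℕ} (hf : ContDiffOn ℝ n f (Icc a b))
    (hM : ∀ z ∈ Icc a b, |iteratedDerivWithin n f (Icc a b) z| ≤ M) {i : ℕ}
    (hzero : ∀ m, i ≤ m → m < n → ∃ z ∈ Icc a b, iteratedDerivWithin m f (Icc a b) z = 0)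
    {j : ℕ} (hij : i + j = n) :
    ∀ z ∈ Icc a b, |iteratedDerivWithin i f (Icc a b) z| ≤ M * (b - a) ^ j := by
  induction j generalizing i with
  | zero => simpa [← hij] using hM
  | succ j ih =>
    obtain ⟨z₀, hz₀, hz₀0⟩ := hzero i le_rfl (by omega)
    have hderiv := ih (i := i + 1) (fun m hm hmn => hzero m (by omega) hmn) (by omega)
    rw [iteratedDerivWithin_succ] at hderiv
    intro z hz
    rw [pow_succ, ← mul_assoc]
    exact abs_le_mul_of_abs_derivWithin_le
      (hf.differentiableOn_iteratedDerivWithin (by norm_cast; omega) (uniqueDiffOn_Icc hab))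
      hz₀ hz₀0 hderiv hz

theorem IsCompact.abs_le_iSup {g : ℝ → ℝ} {s : Set ℝ} (hs : IsCompact s)
    (hg : ContinuousOn g s) {z : ℝ} (hz : z ∈ s) : |g z| ≤ ⨆ w : s, |g w| :=
  le_ciSup (by simpa only [image_eq_range] using hs.bddAbove_image hg.abs) (⟨z, hz⟩ : s)

theorem deriv_bound_of_zeros_general (k : ℕ) (a b : ℝ)
    (f : ℝ → ℝ) (hf : ContDiffOn ℝ (k + 1) f (Icc a b))
    (x : ℕ → ℝ) (hxmem : ∀ i < k, x i ∈ Icc a b)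
    (hxlt : ∀ i j, i < j → j < k → x i < x j)
    (hzero : ∀ i < k, derivWithin f (Icc a b) (x i) = 0)
    (y : ℝ) (hy : y ∈ Icc a b) :
    |derivWithin f (Icc a b) y| ≤
      (⨆ z : Icc a b, |iteratedDerivWithin (k + 1) f (Icc a b) z|) * (b - a) ^ k := by
  obtain hab | rfl := (hy.1.trans hy.2).lt_or_eq
  · have hud := uniqueDiffOn_Icc hab
    have hx : OrderedZeros (iteratedDerivWithin 1 f (Icc a b)) (Icc a b) k x :=
      ⟨fun i hi => ⟨hxmem i hi, by simpa using hzero i hi⟩,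
        fun i hi => hxlt i (i + 1) (by omega) hi⟩
    have hzeros : ∀ m, 1 ≤ m → m < k + 1 →
        ∃ z ∈ Icc a b, iteratedDerivWithin m f (Icc a b) z = 0 := by
      intro m hm hmk
      obtain ⟨c, hc⟩ := hx.exists_iteratedDerivWithin ordConnected_Icc hud (j := m - 1)
        (hf.of_le (by norm_cast; omega))
      rw [Nat.add_sub_cancel' hm] at hc
      exact ⟨c 0, hc.1 0 (by omega)⟩
    have hM (z : ℝ) (hz : z ∈ Icc a b) :=
      IsCompact.abs_le_iSup isCompact_Icc (hf.continuousOn_iteratedDerivWithin le_rfl hud) hz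
    simpa using abs_iteratedDerivWithin_le_of_exists_zero hab (n := k + 1)
      (by exact_mod_cast hf) hM hzeros (add_comm 1 k) y hy
  · have hy0 : derivWithin f (Icc a a) y = 0 := by
      rw [Icc_self]
      exact derivWithin_zero_of_not_accPt fun h =>
        (finite_singleton a).not_infinite (Set.Infinite.of_accPt h)
    rw [hy0, abs_zero]
    exact mul_nonneg (Real.iSup_nonneg fun _ => abs_nonneg _) (pow_nonneg (sub_nonneg.2 le_rfl) k)

/-- **Lemma (elementary analysis).** Let `k ≥ 1` and `f` be `C^{k+1}` on a compact interval
`I = [a,b]`. If `f'` vanishes at `k` points `x_1 < x_2 < ⋯ < x_k` of `I`, then for every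
`y ∈ I` one has `|f'(y)| ≤ ‖f^{(k+1)}‖_∞ · |I|^k`. -/
theorem deriv_bound_of_zeros (k : ℕ) (hk : 1 ≤ k) (a b : ℝ) (hab : a ≤ b)
    (f : ℝ → ℝ) (hf : ContDiffOn ℝ (k + 1) f (Icc a b))
    (x : ℕ → ℝ) (hxmem : ∀ i < k, x i ∈ Icc a b)
    (hxlt : ∀ i j, i < j → j < k → x i < x j)
    (hzero : ∀ i < k, derivWithin f (Icc a b) (x i) = 0)
    (y : ℝ) (hy : y ∈ Icc a b) :
    |derivWithin f (Icc a b) y| ≤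
      (⨆ z : Icc a b, |iteratedDerivWithin (k + 1) f (Icc a b) z|) * (b - a) ^ k :=
  deriv_bound_of_zeros_general k a b f hf x hxmem hxlt hzero y hy

end Paper
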